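/- arXiv:2511.20012 — 3 statements merged into one kernel-verified Lean document; each statement's English description precedes it below -/
import Mathlib

section
/- (Vanishing of H¹ of the adelic complex in the arithmetic case.) Let K be a number field. For every divisor D = Σ n_v[v] (a finitely supported ℤ-valued assignment on the finite places of K), one has 𝔸_K = K + 𝔸(D); that is, for every adele x ∈ 𝔸_K there exists q ∈ K such that v((x − q)_v) ≥ −n_v at every finite place v. Equivalently, the cohomology group H¹(𝒜(D)) = 𝔸_K/(K + 𝔸(D)) of the adelic complex K ⊕ 𝔸(D) → 𝔸_K, (a,b) ↦ a − b, vanishes for every divisor D. -/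
/-!
Choose `0 ≠ d ∈ R` with `d • x` integral at every place. Approximating `d • x` by `c ∈ R` is a
Chinese-remainder problem at the finitely many places where the required bound
`exp (n_v) · |d|_v` is `< 1`, once each local component has been approximated by an element of
`R` (density of `K` in `K_v`); elsewhere integrality suffices. Then `q = c / d`.
-/

open NumberField IsDedekindDomain WithZero Filter

namespace IsDedekindDomain.HeightOneSpectrum

variable {R : Type*} [CommRing R] [IsDedekindDomain R] {K : Type*} [Field K] [Algebra R K]
  [IsFractionRing R K]

theorem exists_forall_intValuation_sub_le (T : Finset (HeightOneSpectrum R))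
    (r : HeightOneSpectrum R → R) (n : HeightOneSpectrum R → ℕ) :
    ∃ c : R, ∀ v ∈ T, v.intValuation (c - r v) ≤ exp (-(n v : ℤ)) := by
  obtain ⟨c, hc⟩ := IsDedekindDomain.exists_forall_sub_mem_ideal (s := T) asIdeal n
    (fun v _ ↦ v.prime) (fun _ _ _ _ hvw h ↦ hvw (HeightOneSpectrum.ext h)) (fun v ↦ r v)
  exact ⟨c, fun v hv ↦ (v.intValuation_le_pow_iff_mem _ _).2 (hc v hv)⟩

theorem eventually_intValuation_eq_one {r : R} (hr : r ≠ 0) :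
    ∀ᶠ v : HeightOneSpectrum R in cofinite, v.intValuation r = 1 := by
  have hspan : Ideal.span {r} ≠ 0 := by simpa [Ideal.span_singleton_eq_bot] using hr
  refine eventually_cofinite.2 ((Ideal.finite_factors hspan).subset fun v hv ↦ ?_)
  exact (v.intValuation_lt_one_iff_dvd r).1 ((v.intValuation_le_one r).lt_of_ne hv)

theorem valued_algebraMap_adicCompletion (v : HeightOneSpectrum R) (k : K) :
    Valued.v (algebraMap K (v.adicCompletion K) k) = v.valuation K k :=
  valuedAdicCompletion_eq_valuation' v k

theorem exists_valued_sub_algebraMap_lt (v : HeightOneSpectrum R) (z : v.adicCompletion K)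
    {γ : ℤᵐ⁰} (hγ : γ ≠ 0) : ∃ k : K, Valued.v (z - algebraMap K (v.adicCompletion K) k) < γ := by
  obtain ⟨w, rfl⟩ := valuedAdicCompletion_surjective K v γ
  have hU : {y | Valued.v (y - z) < Valued.v w} ∈ nhds z :=
    Valued.mem_nhds.2 ⟨Units.mk0 (Valued.v.restrict w) (by simpa using hγ),
      fun y hy ↦ (Valuation.restrict_lt_iff _).1 hy⟩
  obtain ⟨k, hk⟩ := (denseRange_algebraMap (K := K) v).mem_nhds hU
  exact ⟨k, by rwa [Valuation.map_sub_swap]⟩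

theorem exists_valued_sub_lt_of_mem_adicCompletionIntegers (v : HeightOneSpectrum R)
    {z : v.adicCompletion K} (hz : z ∈ v.adicCompletionIntegers K) (γ : ℤᵐ⁰ˣ) :
    ∃ r : R, Valued.v (z - algebraMap R (v.adicCompletion K) r) < γ := by
  obtain ⟨k, hk⟩ :=
    exists_valued_sub_algebraMap_lt v z (lt_min (zero_lt_iff.2 γ.ne_zero) zero_lt_one).ne'
  have hk_int : v.valuation K k ≤ 1 := by
    rw [← valued_algebraMap_adicCompletion, ← sub_sub_cancel z (algebraMap K _ k)]
    exact Valuation.map_sub_le _ hz ((hk.trans_le (min_le_right _ _)).le)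
  obtain ⟨r, hr⟩ := exists_valuation_sub_lt_of_integer v hk_int γ
  refine ⟨r, ?_⟩
  have hkr : Valued.v (algebraMap K (v.adicCompletion K) k - algebraMap R _ r) < γ := by
    rwa [IsScalarTower.algebraMap_apply R K, ← map_sub, valued_algebraMap_adicCompletion,
      Valuation.map_sub_swap]
  rw [← sub_add_sub_cancel z (algebraMap K _ k)]
  exact Valuation.map_add_lt _ (hk.trans_le (min_le_left _ _)) hkr

theorem exists_forall_mem_valued_sub_le (T : Finset (HeightOneSpectrum R))
    {z : ∀ v : HeightOneSpectrum R, v.adicCompletion K}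
    (hz : ∀ v ∈ T, z v ∈ v.adicCompletionIntegers K) {γ : HeightOneSpectrum R → ℤᵐ⁰}
    (hγ : ∀ v ∈ T, γ v ≠ 0) :
    ∃ c : R, ∀ v ∈ T, Valued.v (z v - algebraMap R (v.adicCompletion K) c) ≤ γ v := by
  choose! n hn using fun v (hv : v ∈ T) ↦ exists_exp_neg_natCast_lt (hγ v hv)
  choose! r hr using fun v (hv : v ∈ T) ↦ exists_valued_sub_lt_of_mem_adicCompletionIntegers v
    (hz v hv) (Units.mk0 (exp (-(n v : ℤ))) exp_ne_zero)
  obtain ⟨c, hc⟩ := exists_forall_intValuation_sub_le T r n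
  refine ⟨c, fun v hv ↦ ?_⟩
  have hrc : Valued.v (algebraMap R (v.adicCompletion K) (r v) - algebraMap R _ c) ≤
      exp (-(n v : ℤ)) := by
    rw [← map_sub, valuedAdicCompletion_eq_valuation, valuation_of_algebraMap,
      Valuation.map_sub_swap]
    exact hc v hv
  rw [← sub_add_sub_cancel (z v) (algebraMap R _ (r v))]
  exact (Valuation.map_add_le _ (hr v hv).le hrc).trans (hn v hv).le

theorem exists_forall_valued_sub_le {z : ∀ v : HeightOneSpectrum R, v.adicCompletion K}
    (hz : ∀ v, z v ∈ v.adicCompletionIntegers K) {γ : HeightOneSpectrum R → ℤᵐ⁰}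
    (hγ₀ : ∀ v, γ v ≠ 0) (hγ₁ : ∀ᶠ v in cofinite, 1 ≤ γ v) :
    ∃ c : R, ∀ v, Valued.v (z v - algebraMap R (v.adicCompletion K) c) ≤ γ v := by
  set T := (eventually_cofinite.1 hγ₁).toFinset
  obtain ⟨c, hc⟩ := exists_forall_mem_valued_sub_le T (fun v _ ↦ hz v) (fun v _ ↦ hγ₀ v)
  refine ⟨c, fun v ↦ ?_⟩
  by_cases hv : v ∈ T
  · exact hc v hv
  · have hγv : 1 ≤ γ v := by simpa [T] using hv
    exact (Valuation.map_sub_le _ (hz v) (coe_mem_adicCompletionIntegers v c)).trans hγv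

end IsDedekindDomain.HeightOneSpectrum

namespace IsDedekindDomain.FiniteAdeleRing

open HeightOneSpectrum nonZeroDivisors

variable {R : Type*} [CommRing R] [IsDedekindDomain R] {K : Type*} [Field K] [Algebra R K]
  [IsFractionRing R K]

theorem exists_nonZeroDivisor_mul_mem_adicCompletionIntegers (x : FiniteAdeleRing R K) :
    ∃ d ∈ R⁰, ∀ v, algebraMap R (v.adicCompletion K) d * x v ∈ v.adicCompletionIntegers K := by
  classical
  have hS : {v | x v ∉ v.adicCompletionIntegers K}.Finite := eventually_cofinite.1 x.2
  choose b hb hbx using fun v ↦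
    adicCompletion.mul_nonZeroDivisor_mem_adicCompletionIntegers v (x v)
  refine ⟨∏ v ∈ hS.toFinset, b v, prod_mem fun v _ ↦ hb v, fun v ↦ ?_⟩
  by_cases hv : v ∈ hS.toFinset
  · rw [← Finset.mul_prod_erase _ _ hv, map_mul, mul_right_comm, mul_comm _ (x v)]
    exact mul_mem (hbx v) (coe_mem_adicCompletionIntegers v _)
  · have hxv : x v ∈ v.adicCompletionIntegers K := by simpa using hv
    exact mul_mem (coe_mem_adicCompletionIntegers v _) hxv

theorem exists_forall_valued_sub_algebraMap_le (D : HeightOneSpectrum R →₀ ℤ)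
    (x : FiniteAdeleRing R K) :
    ∃ q : K, ∀ v, Valued.v ((x - algebraMap K (FiniteAdeleRing R K) q) v) ≤ exp (D v) := by
  obtain ⟨d, hd, hdx⟩ := exists_nonZeroDivisor_mul_mem_adicCompletionIntegers x
  have hd₀ : d ≠ 0 := nonZeroDivisors.ne_zero hd
  have hγ₁ : ∀ᶠ v in cofinite, 1 ≤ exp (D v) * v.intValuation d := by
    filter_upwards [eventually_cofinite.2 D.hasFiniteSupport, eventually_intValuation_eq_one hd₀]
      with v hDv hdv
    simp [hDv, hdv]
  obtain ⟨c, hc⟩ := exists_forall_valued_sub_le hdx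
    (fun v ↦ mul_ne_zero exp_ne_zero (v.intValuation_ne_zero d hd₀)) hγ₁
  refine ⟨algebraMap R K c / algebraMap R K d, fun v ↦ ?_⟩
  have hdv : algebraMap R (v.adicCompletion K) d ≠ 0 := by
    rw [← (Valued.v).ne_zero_iff, valuedAdicCompletion_eq_valuation, valuation_of_algebraMap]
    exact v.intValuation_ne_zero d hd₀
  have hxq : (x - algebraMap K _ (algebraMap R K c / algebraMap R K d)) v =
      (algebraMap R (v.adicCompletion K) d * x v - algebraMap R _ c) / algebraMap R _ d := by
    change x v - algebraMap K (v.adicCompletion K) (algebraMap R K c / algebraMap R K d) = _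
    rw [map_div₀, ← IsScalarTower.algebraMap_apply, ← IsScalarTower.algebraMap_apply]
    field_simp
  rw [hxq, map_div₀, valuedAdicCompletion_eq_valuation, valuation_of_algebraMap]
  exact div_le_of_le_mul₀ zero_le zero_le (hc v)

end IsDedekindDomain.FiniteAdeleRing

/-- (Vanishing of `H¹` of the adelic complex in the arithmetic case.)
For every number field `K` and every divisor `D = Σ n_v [v]` (a finitely supported `ℤ`-valued
assignment on the finite places of `K`), one has `𝔸_K = K + 𝔸(D)`: for every adele `x` there is
`q ∈ K` with `v((x - q)_v) ≥ -n_v` at every finite place `v`, i.e.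
`H¹(𝒜(D)) = 𝔸_K/(K + 𝔸(D)) = 0`. -/
theorem adelic_H1_vanishes (K : Type*) [Field K] [NumberField K]
    (D : HeightOneSpectrum (𝓞 K) →₀ ℤ) (x : AdeleRing (𝓞 K) K) :
    ∃ q : K, ∀ v : HeightOneSpectrum (𝓞 K),
      Valued.v ((x - algebraMap K (AdeleRing (𝓞 K) K) q).2 v) ≤
        (↑(Multiplicative.ofAdd (D v)) : WithZero (Multiplicative ℤ)) :=
  FiniteAdeleRing.exists_forall_valued_sub_algebraMap_le D x.2
end

section
/- Let F be an infinite field and endow the field of formal Laurent series F((X)) with the topology induced by its X-adic valuation. Then no open subgroup of the additive group of F((X)) is compact; in particular, the ring of integers F⟦X⟧ is an open, non-compact subgroup. -/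
/-!
A neighbourhood of `0` in `F⸨X⸩` contains some `X ^ n • F⟦X⟧`, hence all the monomials `c • X ^ n`
(`c : F`). These lie in pairwise distinct cosets of the open subgroup `X ^ (n + 1) • F⟦X⟧`, and a
compact set meets only finitely many cosets of an open subgroup, so for infinite `F` no
neighbourhood of `0` is compact.
-/

open Topology WithZero HahnSeries

theorem IsCompact.finite_image_quotientAddGroup_mk {G : Type*} [AddGroup G] [TopologicalSpace G]
    [IsTopologicalAddGroup G] {H : AddSubgroup G} (hH : IsOpen (H : Set G)) {s : Set G}
    (hs : IsCompact s) : (QuotientAddGroup.mk '' s : Set (G ⧸ H)).Finite :=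
  have := QuotientAddGroup.discreteTopology hH
  (hs.image QuotientAddGroup.continuous_mk).finite_of_discrete

namespace LaurentSeries

variable {K : Type*} [Field K]

variable (K) in
/-- `X ^ n • K⟦X⟧`, as an additive subgroup of `K⸨X⸩`. -/
noncomputable def xPowAddSubgroup (n : ℤ) : AddSubgroup K⸨X⸩ :=
  Valued.v.leAddSubgroup (exp (-n))

theorem mem_xPowAddSubgroup {n : ℤ} {f : K⸨X⸩} :
    f ∈ xPowAddSubgroup K n ↔ ∀ k < n, f.coeff k = 0 :=
  valuation_le_iff_coeff_lt_eq_zero K (D := n)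

theorem single_mem_xPowAddSubgroup {n : ℤ} (c : K) : single n c ∈ xPowAddSubgroup K n :=
  mem_xPowAddSubgroup.mpr fun _ hk ↦ coeff_single_of_ne hk.ne

theorem isOpen_xPowAddSubgroup (n : ℤ) : IsOpen (xPowAddSubgroup K n : Set K⸨X⸩) := by
  have hr : Valued.v.restrict (single n (1 : K) : K⸨X⸩) ≠ 0 := by simp
  convert Valued.isOpen_closedBall K⸨X⸩ hr using 1
  ext f
  rw [Set.mem_ofPred_eq, Valuation.restrict_le_iff, valuation_single_zpow]
  rfl

theorem exists_xPowAddSubgroup_subset {s : Set K⸨X⸩} (hs : s ∈ 𝓝 0) :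
    ∃ n : ℤ, (xPowAddSubgroup K n : Set K⸨X⸩) ⊆ s := by
  obtain ⟨γ, hγ⟩ := Valued.mem_nhds_zero.mp hs
  set r := MonoidWithZeroHom.ValueGroup₀.embedding γ.1
  have hr : r ≠ 0 := by simp [r]
  refine ⟨1 - log r, fun f hf ↦ hγ ?_⟩
  refine (Valuation.restrict_lt_iff_lt_embedding (v := Valued.v)).mpr ?_
  calc Valued.v f ≤ exp (-(1 - log r)) := hf
    _ < exp (log r) := exp_lt_exp.mpr (by omega)
    _ = r := exp_log hr

theorem not_isCompact_of_mem_nhds_zero [Infinite K] {s : Set K⸨X⸩} (hs : s ∈ 𝓝 0) :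
    ¬IsCompact s := by
  intro hcomp
  obtain ⟨n, hn⟩ := exists_xPowAddSubgroup_subset hs
  have hsingle : Set.range (single n : K → K⸨X⸩) ⊆ s :=
    Set.range_subset_iff.mpr fun c ↦ hn (single_mem_xPowAddSubgroup c)
  have hinj : Set.InjOn (QuotientAddGroup.mk (s := xPowAddSubgroup K (n + 1)))
      (Set.range (single n)) := by
    rintro _ ⟨c, rfl⟩ _ ⟨d, rfl⟩ hcd
    have hcoeff := mem_xPowAddSubgroup.mp (QuotientAddGroup.eq.mp hcd) n (lt_add_one n)
    exact congrArg _ (by simpa [neg_add_eq_zero] using hcoeff)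
  exact (Set.infinite_range_of_injective (single_injective n)).not_finite <|
    ((hcomp.finite_image_quotientAddGroup_mk (isOpen_xPowAddSubgroup _)).subset
      (Set.image_mono hsingle)).of_finite_image hinj

end LaurentSeries

/-- Let `F` be an infinite field and endow `F((X))` with the topology induced
by its `X`-adic valuation. Then no open subgroup of the additive group of `F((X))` is compact;
in particular, the ring of integers `F⟦X⟧ = {x | v(x) ≤ 1}` is an open, non-compact subgroup. -/
theorem laurentSeries_no_compact_open_subgroup (F : Type*) [Field F] [Infinite F] :
    (∀ U : AddSubgroup (LaurentSeries F), IsOpen (U : Set (LaurentSeries F)) →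
      ¬IsCompact (U : Set (LaurentSeries F))) ∧
    IsOpen {x : LaurentSeries F | Valued.v x ≤ 1} ∧
    ¬IsCompact {x : LaurentSeries F | Valued.v x ≤ 1} := by
  have hopen : IsOpen {x : LaurentSeries F | Valued.v x ≤ 1} := Valued.isOpen_integer (LaurentSeries F)
  have hzero : (0 : LaurentSeries F) ∈ {x : LaurentSeries F | Valued.v x ≤ 1} := by simp
  exact ⟨fun U hU ↦ LaurentSeries.not_isCompact_of_mem_nhds_zero (hU.mem_nhds U.zero_mem), hopen,
    LaurentSeries.not_isCompact_of_mem_nhds_zero (hopen.mem_nhds hzero)⟩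
end

section
/- Let F be an infinite field and endow the field of formal Laurent series F((X)) with the topology induced by its X-adic valuation. Then F((X)) is not a locally compact topological space. -/
/-!
A compact neighbourhood of `0` in `F((X))` contains a ball `X^n F⟦X⟧`, hence every `c X^n` with
`c ∈ F`. Extracting the `n`-th coefficient is continuous into `F` with the discrete topology, so it
maps the compact neighbourhood onto a finite set that contains all of `F`.
-/

open Filter Topology WithZero

theorem Valued.exists_lt_subset_of_mem_nhds_zero {R Γ₀ : Type*} [Ring R]
    [LinearOrderedCommGroupWithZero Γ₀] [Valued R Γ₀] {s : Set R} (hs : s ∈ 𝓝 (0 : R)) :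
    ∃ γ : Γ₀, γ ≠ 0 ∧ {x | Valued.v x < γ} ⊆ s := by
  obtain ⟨γ, hγ⟩ := Valued.mem_nhds_zero.mp hs
  exact ⟨_, (map_ne_zero _).mpr γ.ne_zero,
    fun x hx ↦ hγ ((Valuation.restrict_lt_iff_lt_embedding _).mpr hx)⟩

namespace LaurentSeries

variable {K : Type*} [Field K]

theorem continuous_coeff [TopologicalSpace K] [DiscreteTopology K] (d : ℤ) :
    Continuous fun f : K⸨X⸩ ↦ f.coeff d := by
  have := @UniformContinuous.continuous K⸨X⸩ K _ ⊥ _ (uniformContinuous_coeff d)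
  rwa [DiscreteTopology.eq_bot (α := K)]

theorem valuation_single_le (n : ℤ) (c : K) :
    Valued.v (HahnSeries.single n c : K⸨X⸩) ≤ exp (-n) :=
  (valuation_le_iff_coeff_lt_eq_zero K).mpr fun _ hd ↦ HahnSeries.coeff_single_of_ne hd.ne

theorem exists_forall_single_mem_of_mem_nhds_zero {s : Set K⸨X⸩} (hs : s ∈ 𝓝 0) :
    ∃ n : ℤ, ∀ c : K, HahnSeries.single n c ∈ s := by
  obtain ⟨γ, hγ0, hγs⟩ := Valued.exists_lt_subset_of_mem_nhds_zero hs
  refine ⟨1 - log γ, fun c ↦ hγs ((valuation_single_le _ c).trans_lt ?_)⟩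
  rw [← lt_log_iff_exp_lt hγ0]
  omega

end LaurentSeries

/-- Let `F` be an infinite field and endow `F((X))` with the topology induced
by its `X`-adic valuation. Then `F((X))` is not a locally compact topological space. -/
theorem laurentSeries_not_locallyCompact (F : Type*) [Field F] [Infinite F] :
    ¬LocallyCompactSpace (LaurentSeries F) := by
  intro _
  obtain ⟨K, hK, hK0⟩ := exists_compact_mem_nhds (0 : LaurentSeries F)
  obtain ⟨n, hn⟩ := LaurentSeries.exists_forall_single_mem_of_mem_nhds_zero hK0
  let _ : TopologicalSpace F := ⊥
  have : DiscreteTopology F := ⟨rfl⟩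
  have hfinite := (hK.image (LaurentSeries.continuous_coeff n)).finite_of_discrete
  exact Set.infinite_univ (hfinite.subset fun c _ ↦ ⟨_, hn c, HahnSeries.coeff_single_same n c⟩)
end
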